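/- arXiv:1211.6315 — 2 statements merged into one kernel-verified Lean document; each statement's English description precedes it below -/
import Mathlib

section
/- Every locally opaque history is strictly serializable. -/
open scoped Classical

namespace TM

/-- A transactional operation (event), tagged with its transaction identifier.
Values are natural numbers; the initial value of every t-object is `0`.
`read t x none` is a read returning the abort value `A`; `read t x (some v)` is a
successful read returning `v`.  `write t x v` is a successful write, `writeFail t x v`
is a write returning `A`.  `tryCommit t true` returns commit `C`,
`tryCommit t false` returns `A`, and `tryAbort t` returns `A`. -/
inductive Op (Txn Obj : Type) : Type
  | read (t : Txn) (x : Obj) (v : Option ℕ)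
  | write (t : Txn) (x : Obj) (v : ℕ)
  | writeFail (t : Txn) (x : Obj) (v : ℕ)
  | tryCommit (t : Txn) (ok : Bool)
  | tryAbort (t : Txn)

variable {Txn Obj : Type}

/-- The transaction of an operation. -/
def Op.txn : Op Txn Obj → Txn
  | .read t _ _ => t
  | .write t _ _ => t
  | .writeFail t _ _ => t
  | .tryCommit t _ => t
  | .tryAbort t => t

/-- Is this operation a read operation? -/
def Op.isRead : Op Txn Obj → Prop
  | .read _ _ _ => True
  | _ => False

/-- Does this operation return the abort value `A`? -/
def Op.aborting : Op Txn Obj → Prop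
  | .read _ _ none => True
  | .writeFail _ _ _ => True
  | .tryCommit _ false => True
  | .tryAbort _ => True
  | _ => False

/-- A history is a (sequential) finite sequence of transactional operations. -/
abbrev History (Txn Obj : Type) : Type := List (Op Txn Obj)

/-- The set of transactions having an event in `H`. -/
def txnsOf (H : History Txn Obj) : Set Txn := {t | ∃ o ∈ H, o.txn = t}

/-- `t` is committed in `H`: its tryCommit returned `C`. -/
def committed (H : History Txn Obj) (t : Txn) : Prop := Op.tryCommit t true ∈ H

/-- `t` is aborted in `H`: some operation of `t` returned `A`. -/
def aborted (H : History Txn Obj) (t : Txn) : Prop := ∃ o ∈ H, o.txn = t ∧ o.aborting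

/-- `t` is complete in `H` (committed or aborted). -/
def complete (H : History Txn Obj) (t : Txn) : Prop := committed H t ∨ aborted H t

/-- `t` is incomplete in `H`: it has an event but is neither committed nor aborted. -/
def incomplete (H : History Txn Obj) (t : Txn) : Prop := t ∈ txnsOf H ∧ ¬ complete H t

/-- Two histories are equivalent if they have the same (multi)set of events. -/
def equivalentH (H1 H2 : History Txn Obj) : Prop := H1.Perm H2

/-- `x` belongs to the write set of `t` in `H`. -/
def writesTo (H : History Txn Obj) (t : Txn) (x : Obj) : Prop := ∃ v, Op.write t x v ∈ H

/-- Real-time order: `t` is complete and every event of `t` precedes every event of `u`. -/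
def rtPrec (H : History Txn Obj) (t u : Txn) : Prop :=
  t ∈ txnsOf H ∧ u ∈ txnsOf H ∧ complete H t ∧
    ∀ (i j : ℕ) (a b : Op Txn Obj), H[i]? = some a → a.txn = t → H[j]? = some b → b.txn = u → i < j

/-- `H` is t-sequential: every two distinct transactions are related by real-time order. -/
def tSequential (H : History Txn Obj) : Prop :=
  ∀ t ∈ txnsOf H, ∀ u ∈ txnsOf H, t ≠ u → rtPrec H t u ∨ rtPrec H u t

/-- Conflict order `t ≺_H^CO u`: (w-w) `t`'s commit precedes `u`'s commit and their
write sets intersect; (w-r) `t`'s commit precedes a successful read by `u` of an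
object in `t`'s write set; (r-w) a successful read by `t` of an object in `u`'s
write set precedes `u`'s commit. -/
def coPrec (H : History Txn Obj) (t u : Txn) : Prop :=
  (∃ i j : ℕ, i < j ∧ H[i]? = some (Op.tryCommit t true) ∧ H[j]? = some (Op.tryCommit u true) ∧
    ∃ x, writesTo H t x ∧ writesTo H u x) ∨
  (∃ (i j : ℕ) (x : Obj) (v : ℕ), i < j ∧ H[i]? = some (Op.tryCommit t true) ∧
    H[j]? = some (Op.read u x (some v)) ∧ writesTo H t x) ∨
  (∃ (i j : ℕ) (x : Obj) (v : ℕ), i < j ∧ H[i]? = some (Op.read t x (some v)) ∧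
    H[j]? = some (Op.tryCommit u true) ∧ writesTo H u x)

/-- The successful read of `x` returning `v` occurring at position `j` of `H` is legal:
either the transaction of its last write (the latest preceding commit of a transaction
writing to `x`) wrote `v` to `x`, or there is no such committed writer and `v` is the
initial value `0` (written by the initial transaction `T₀`). -/
def readLegalAt (H : History Txn Obj) (j : ℕ) (x : Obj) (v : ℕ) : Prop :=
  (∃ (i : ℕ) (u : Txn), i < j ∧ H[i]? = some (Op.tryCommit u true) ∧ writesTo H u x ∧
    Op.write u x v ∈ H ∧
    ∀ (i' : ℕ) (u' : Txn), i < i' → i' < j → H[i']? = some (Op.tryCommit u' true) → ¬ writesTo H u' x) ∨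
  ((∀ (i : ℕ) (u : Txn), i < j → H[i]? = some (Op.tryCommit u true) → ¬ writesTo H u x) ∧ v = 0)

/-- `H` is legal if all its successful reads are legal. -/
def legalH (H : History Txn Obj) : Prop :=
  ∀ (j : ℕ) (t : Txn) (x : Obj) (v : ℕ), H[j]? = some (Op.read t x (some v)) → readLegalAt H j x v

/-- `H` is valid: every successful read returns a value written to the object by a
transaction committed before the read (or the initial value `0` written by `T₀`). -/
def validH (H : History Txn Obj) : Prop :=
  ∀ (j : ℕ) (t : Txn) (x : Obj) (v : ℕ), H[j]? = some (Op.read t x (some v)) →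
    (∃ (i : ℕ) (u : Txn), i < j ∧ H[i]? = some (Op.tryCommit u true) ∧ Op.write u x v ∈ H) ∨ v = 0

/-- The completion `H̄` of `H`: an abort event is inserted immediately after the last
event of every incomplete transaction. -/
noncomputable def completion (H : History Txn Obj) : History Txn Obj :=
  ((List.range H.length).map fun i =>
    match H[i]? with
    | none => ([] : History Txn Obj)
    | some o =>
      if incomplete H o.txn ∧ ∀ (j : ℕ) (b : Op Txn Obj), i < j → H[j]? = some b → b.txn ≠ o.txn
      then [o, Op.tryAbort o.txn] else [o]).flatten

/-- `S` respects the real-time order of `H`. -/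
def respectsRT (H S : History Txn Obj) : Prop := ∀ t u, rtPrec H t u → rtPrec S t u

/-- `S` respects the conflict order of `H`. -/
def respectsCO (H S : History Txn Obj) : Prop := ∀ t u, coPrec H t u → coPrec S t u

/-- `H` is opaque: `H` is valid and there is a legal t-sequential history `S`
equivalent to `H̄` respecting the real-time order of `H`. -/
def opaqueH (H : History Txn Obj) : Prop :=
  validH H ∧ ∃ S : History Txn Obj,
    equivalentH S (completion H) ∧ tSequential S ∧ legalH S ∧ respectsRT H S

/-- `H` is conflict opaque: `H` is valid and there is a legal t-sequential history `S`
equivalent to `H̄` respecting both the real-time and the conflict order of `H`. -/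
def coOpaqueH (H : History Txn Obj) : Prop :=
  validH H ∧ ∃ S : History Txn Obj,
    equivalentH S (completion H) ∧ tSequential S ∧ legalH S ∧ respectsRT H S ∧ respectsCO H S

/-- `H^t`: the shortest prefix of `H` containing all events of `t`. -/
noncomputable def prefixUpTo (H : History Txn Obj) (t : Txn) : History Txn Obj :=
  H.take (H.length - H.reverse.findIdx fun o => decide (o.txn = t))

/-- The sub-history of `H` consisting of all events of transactions in `S`. -/
noncomputable def restrictTo (H : History Txn Obj) (S : Set Txn) : History Txn Obj :=
  H.filter fun o => decide (o.txn ∈ S)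

/-- `H₋R`: the sub-history of `H` with all events of transactions in `R` removed. -/
noncomputable def removeTxns (H : History Txn Obj) (R : Set Txn) : History Txn Obj :=
  H.filter fun o => decide (o.txn ∉ R)

/-- The local sub-history `sub(t,H)`: the sub-history of `H^t` consisting of the events
of all transactions committed in `H^t` together with the applicable events of `t`
(all events of `t` if `t` is committed; only its read operations otherwise). -/
noncomputable def localSub (H : History Txn Obj) (t : Txn) : History Txn Obj :=
  (prefixUpTo H t).filter fun o =>
    decide (committed (prefixUpTo H t) o.txn ∨ (o.txn = t ∧ o.isRead))

/-- `o'` is the non-aborting variant of the aborting operation `o`: `r(x,A)` becomes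
`r(x,v)` for some value `v`, `w(x,v,A)` becomes `w(x,v)`, `tryC(A)` becomes `tryC(C)`. -/
def commitVariant : Op Txn Obj → Op Txn Obj → Prop
  | Op.read t x none, o' => ∃ v, o' = Op.read t x (some v)
  | Op.writeFail t x v, o' => o' = Op.write t x v
  | Op.tryCommit t false, o' => o' = Op.tryCommit t true
  | _, _ => False

/-- `ℋ^{t,C}`: the set of histories obtained from `H^t` by replacing the last
(aborting) operation of `t` with a corresponding non-aborting operation. -/
def HTC (H : History Txn Obj) (t : Txn) : Set (History Txn Obj) :=
  {H' | ∃ pre o o', prefixUpTo H t = pre ++ [o] ∧ Op.txn o = t ∧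
    commitVariant o o' ∧ H' = pre ++ [o']}

/-- `ℋ^{t,C}₋R`: the histories of `ℋ^{t,C}` with all events of transactions in `R` removed. -/
def HTCminus (H : History Txn Obj) (t : Txn) (R : Set Txn) : Set (History Txn Obj) :=
  {K | ∃ H' ∈ HTC H t, K = removeTxns H' R}

/-- `prevAb(t,H)`: the transactions that aborted before `t`'s terminal operation or are
incomplete when `t` aborted. -/
def prevAb (H : History Txn Obj) (t : Txn) : Set Txn :=
  {u | aborted (prefixUpTo H t).dropLast u ∨ incomplete (prefixUpTo H t) u}

/-- `Perm(P)`: `H ∈ P` and no aborted transaction of `H` can be turned into a committed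
one while preserving `P`. -/
def permissive (P : Set (History Txn Obj)) : Set (History Txn Obj) :=
  {H | H ∈ P ∧ ∀ t, aborted H t → ∀ H' ∈ HTC H t, H' ∉ P}

/-- `NI(P)`: `H ∈ P` and for every aborted transaction `t` of `H`, no removal of a
subset of `prevAb(t,H)` allows turning `t` into a committed transaction preserving `P`. -/
def nonInterfering (P : Set (History Txn Obj)) : Set (History Txn Obj) :=
  {H | H ∈ P ∧ ∀ t, aborted H t → ∀ R ⊆ prevAb H t, ∀ H' ∈ HTCminus H t R, H' ∉ P}

/-- A correctness criterion `P` is local if membership of a history in `P` is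
equivalent to membership of all its local sub-histories. -/
def IsLocal (P : Set (History Txn Obj)) : Prop :=
  ∀ H : History Txn Obj, H ∈ P ↔ ∀ t ∈ txnsOf H, localSub H t ∈ P

/-- `H` is locally opaque: every local sub-history is opaque. -/
def locallyOpaque (H : History Txn Obj) : Prop := ∀ t ∈ txnsOf H, opaqueH (localSub H t)

/-- `H` is conflict locally opaque: every local sub-history is conflict opaque. -/
def confLocallyOpaque (H : History Txn Obj) : Prop :=
  ∀ t ∈ txnsOf H, coOpaqueH (localSub H t)

/-- `H` is strictly serializable: `H` is valid and the sub-history of its committed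
transactions is opaque. -/
def strictlySerializable (H : History Txn Obj) : Prop :=
  validH H ∧ opaqueH (restrictTo H {u | committed H u})

/-- The edge relation of the conflict graph `CG(H)`: real-time or conflict order. -/
def cgEdge (H : History Txn Obj) (t u : Txn) : Prop := rtPrec H t u ∨ coPrec H t u

/-- The conflict graph `CG(H)` is acyclic: no directed cycle. -/
def cgAcyclic (H : History Txn Obj) : Prop := ∀ t, ¬ Relation.TransGen (cgEdge H) t t

/-- `t` causally precedes `u` (one step): same process and real-time precedence, or
`u` reads a value written by the committed transaction `t`. -/
def causalBase {Proc : Type} (proc : Txn → Proc) (H : History Txn Obj) (t u : Txn) : Prop :=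
  (proc t = proc u ∧ rtPrec H t u) ∨
  (committed H t ∧ ∃ (x : Obj) (v : ℕ), Op.write t x v ∈ H ∧ Op.read u x (some v) ∈ H)

/-- The causal past `CP(t)`: all transactions causally preceding `t`, together with `t`. -/
def causalPast {Proc : Type} (proc : Txn → Proc) (H : History Txn Obj) (t : Txn) : Set Txn :=
  {u | Relation.TransGen (causalBase proc H) u t} ∪ {t}

/-- Virtual world consistency: the sub-history of committed transactions is opaque and
the restriction of `H` to the causal past of every transaction is opaque. -/
def VWC {Proc : Type} (proc : Txn → Proc) (H : History Txn Obj) : Prop :=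
  opaqueH (restrictTo H {u | committed H u}) ∧
  ∀ t ∈ txnsOf H, opaqueH (restrictTo H (causalPast proc H t))

/-- The liveSet of `t` in `H`: the transactions incomplete at the point of `t`'s last event. -/
def liveSet (H : History Txn Obj) (t : Txn) : Set Txn := {u | incomplete (prefixUpTo H t) u}

/-- A complete transaction `t` is obsolete in `H` if every transaction of its liveSet
has terminated in `H`. -/
def obsolete (H : History Txn Obj) (t : Txn) : Prop :=
  complete H t ∧ ∀ u ∈ liveSet H t, complete H u

/-- `obs(H,U)` (for `U` generated by the obsolete transaction `t`): the (shortest)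
prefix of `H` in which all transactions of `liveSet(t)` are complete. -/
noncomputable def obsPrefix (H : History Txn Obj) (t : Txn) : History Txn Obj :=
  H.take (sInf {n : ℕ | ∀ u ∈ liveSet H t, complete (H.take n) u})

/-- `u` is the last transaction of `U` to commit a write to `x` in `H`. -/
def lastCommitterFor (H : History Txn Obj) (U : Set Txn) (x : Obj) (u : Txn) : Prop :=
  u ∈ U ∧ writesTo H u x ∧ committed H u ∧
  ∀ u' ∈ U, u' ≠ u → writesTo H u' x → committed H u' →
    ∃ i j : ℕ, i < j ∧ H[i]? = some (Op.tryCommit u' true) ∧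
      H[j]? = some (Op.tryCommit u true)

/-- Which events survive the trimming of the transactions of `U`: all events of
transactions outside `U`; of a transaction in `U`, only its write events to objects
for which it is the last committer in `U`, and its commit event if it is the last
committer in `U` for some object. -/
def keepInTrim (H : History Txn Obj) (U : Set Txn) : Op Txn Obj → Prop
  | Op.write u x _ => u ∉ U ∨ lastCommitterFor H U x u
  | Op.tryCommit u b => u ∉ U ∨ (b = true ∧ ∃ x : Obj, lastCommitterFor H U x u)
  | o => Op.txn o ∉ U

/-- `trim(H,U)`: remove all read events of transactions in `U`; for each t-object keep
only the write and commit events of the last transaction in `U` to commit a write to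
it; remove all events of the other transactions of `U`. -/
noncomputable def trim (H : History Txn Obj) (U : Set Txn) : History Txn Obj :=
  H.filter fun o => decide (keepInTrim H U o)

end TM

/-!
A successful read of `t` at position `j` of `H` is kept by `sub(t,H)`, and the events
preceding it there are events preceding position `j` in `H`; so validity of `sub(t,H)`
yields validity of that read in `H`.  For the committed part, let `t` be the transaction
of the last event of `H` belonging to a committed transaction.  Then `H^t` already contains
every commit of `H` and `t` is committed, so `sub(t,H)` is exactly the committed
sub-history of `H`; if there is no such event, that sub-history is empty, hence opaque.
-/

namespace List

variable {α : Type*} {L : List α} {p : α → Bool} {j : ℕ}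

theorem filter_eq_filter_take_append_filter_drop (j : ℕ) :
    L.filter p = (L.take j).filter p ++ (L.drop j).filter p := by
  rw [← filter_append, take_append_drop]

theorem getElem?_filter_length_filter_take {a : α} (hj : L[j]? = some a) (hp : p a = true) :
    (L.filter p)[((L.take j).filter p).length]? = some a := by
  obtain ⟨hlen, rfl⟩ := getElem?_eq_some_iff.mp hj
  rw [filter_eq_filter_take_append_filter_drop (L := L) j, drop_eq_getElem_cons hlen,
    getElem?_append_right le_rfl, Nat.sub_self, filter_cons_of_pos hp, getElem?_cons_zero]

theorem take_length_filter_take_filter :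
    (L.filter p).take ((L.take j).filter p).length = (L.take j).filter p := by
  rw [filter_eq_filter_take_append_filter_drop (L := L) j, take_append_length]

theorem exists_lt_getElem?_of_mem_take {b : α} (hb : b ∈ L.take j) :
    ∃ i < j, L[i]? = some b := by
  obtain ⟨i, hi, rfl⟩ := mem_take_iff_getElem.mp hb
  exact ⟨i, by omega, getElem?_eq_getElem _⟩

end List

namespace TM

variable {Txn Obj : Type}

/-- `validH H` unfolds to: every successful read `r(x,v)` at position `j` satisfies
`readValidAt H j x v`. -/
def readValidAt (H : History Txn Obj) (j : ℕ) (x : Obj) (v : ℕ) : Prop :=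
  (∃ (i : ℕ) (u : Txn), i < j ∧ H[i]? = some (Op.tryCommit u true) ∧ Op.write u x v ∈ H) ∨
    v = 0

theorem readValidAt_of_subset {H H' : History Txn Obj} {j j' : ℕ} {x : Obj} {v : ℕ}
    (hsub : H' ⊆ H) (htake : H'.take j' ⊆ H.take j) (hread : readValidAt H' j' x v) :
    readValidAt H j x v := by
  rcases hread with ⟨i, u, hi, hcommit, hwrite⟩ | hzero
  · have hmem : Op.tryCommit u true ∈ H'.take j' :=
      List.mem_iff_getElem?.mpr ⟨i, by rw [List.getElem?_take, if_pos hi, hcommit]⟩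
    obtain ⟨i', hi', hcommit'⟩ := List.exists_lt_getElem?_of_mem_take (htake hmem)
    exact Or.inl ⟨i', u, hi', hcommit', hsub hwrite⟩
  · exact Or.inr hzero

theorem getElem?_prefixUpTo {H : History Txn Obj} {t : Txn} {j : ℕ} {o : Op Txn Obj}
    (hj : H[j]? = some o) (ho : o.txn = t) : (prefixUpTo H t)[j]? = some o := by
  obtain ⟨hlen, hjo⟩ := List.getElem?_eq_some_iff.mp hj
  have hfind : H.reverse.findIdx (fun o => decide (o.txn = t)) ≤ H.length - 1 - j := by
    by_contra! hlt
    have hnot := List.not_of_lt_findIdx hlt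
    rw [List.getElem_reverse] at hnot
    simp only [show H.length - 1 - (H.length - 1 - j) = j by omega, hjo, ho] at hnot
    simp at hnot
  rw [prefixUpTo, List.getElem?_take, if_pos (by omega), hj]

theorem validH_of_forall_validH_localSub {H : History Txn Obj}
    (h : ∀ t ∈ txnsOf H, validH (localSub H t)) : validH H := by
  intro j t x v hj
  obtain ⟨n, hP⟩ : ∃ n, prefixUpTo H t = H.take n := ⟨_, rfl⟩
  have hlocal := h t ⟨_, List.mem_of_getElem? hj, rfl⟩
  refine readValidAt_of_subset (j' := (((prefixUpTo H t).take j).filter _).length) ?_ ?_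
    (hlocal _ t x v (List.getElem?_filter_length_filter_take (getElem?_prefixUpTo hj rfl) ?_))
  · exact List.Subset.trans (List.filter_subset_self _) (hP ▸ List.take_subset n H)
  · rw [localSub, List.take_length_filter_take_filter, hP, List.take_take]
    exact List.Subset.trans (List.filter_subset_self _)
      (List.take_subset_take_left _ (min_le_left _ _))
  · simp [Op.txn, Op.isRead]

theorem prefixUpTo_append_cons {A B : History Txn Obj} {o : Op Txn Obj} {t : Txn}
    (ho : o.txn = t) (hB : ∀ b ∈ B, b.txn ≠ t) : prefixUpTo (A ++ o :: B) t = A ++ [o] := by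
  have hfind : (A ++ o :: B).reverse.findIdx (fun o => decide (o.txn = t)) = B.length := by
    rw [List.findIdx_eq (by simp)]
    refine ⟨by simp [ho], fun i hi => ?_⟩
    simp only [List.reverse_append, List.reverse_cons, List.append_assoc]
    rw [List.getElem_append_left (by simpa using hi)]
    simpa using hB _ (List.getElem_mem _)
  rw [prefixUpTo, hfind,
    show (A ++ o :: B).length - B.length = (A ++ [o]).length by simp; omega,
    show A ++ o :: B = (A ++ [o]) ++ B by simp, List.take_append_length]

theorem localSub_eq_restrictTo_committed {H A B : History Txn Obj} {o : Op Txn Obj}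
    (hH : H = A ++ o :: B) (ho : committed H o.txn) (hB : ∀ b ∈ B, ¬ committed H b.txn) :
    localSub H o.txn = restrictTo H {u | committed H u} := by
  have hsplit : H = (A ++ [o]) ++ B := by simp [hH]
  have hpre : prefixUpTo H o.txn = A ++ [o] :=
    hH ▸ prefixUpTo_append_cons rfl fun b hb heq => hB b hb (heq ▸ ho)
  have hcomm : ∀ u, committed (A ++ [o]) u ↔ committed H u := by
    refine fun u => ⟨fun hu => hsplit ▸ List.mem_append_left B hu, fun hu => ?_⟩
    have hu' : Op.tryCommit u true ∈ (A ++ [o]) ++ B := hsplit ▸ hu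
    rcases List.mem_append.mp hu' with hA | hB'
    · exact hA
    · exact absurd hu (hB _ hB')
  calc localSub H o.txn = (A ++ [o]).filter fun b => decide (b.txn ∈ {u | committed H u}) := by
        rw [localSub, hpre]
        refine List.filter_congr fun b _ => decide_eq_decide.mpr ?_
        rw [hcomm, Set.mem_ofPred_eq, or_iff_left_of_imp fun h => h.1 ▸ ho]
    _ = ((A ++ [o]) ++ B).filter fun b => decide (b.txn ∈ {u | committed H u}) := by
        have hdrop : B.filter (fun b => decide (b.txn ∈ {u | committed H u})) = [] :=
          List.filter_eq_nil_iff.mpr fun b hb => by simpa using hB b hb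
        rw [List.filter_append (A ++ [o]) B, hdrop, List.append_nil]
    _ = restrictTo H {u | committed H u} := by rw [← hsplit, restrictTo]

theorem restrictTo_committed_eq_nil_or_eq_localSub (H : History Txn Obj) :
    restrictTo H {u | committed H u} = [] ∨
      ∃ t ∈ txnsOf H, localSub H t = restrictTo H {u | committed H u} := by
  cases hlast : H.reverse.find? (fun o => committed H o.txn) with
  | none =>
    left
    refine List.filter_eq_nil_iff.mpr fun b hb => ?_
    simpa using List.find?_eq_none.mp hlast b (List.mem_reverse.mpr hb)
  | some o =>
    right
    obtain ⟨ho, A, B, hrev, hA⟩ := List.find?_eq_some_iff_append.mp hlast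
    have hH : H = B.reverse ++ o :: A.reverse := by
      rw [← List.reverse_reverse H, hrev]; simp
    refine ⟨o.txn, ⟨o, by rw [hH]; simp, rfl⟩, ?_⟩
    refine localSub_eq_restrictTo_committed hH (by simpa using ho) fun b hb => ?_
    simpa using hA b (List.mem_reverse.mp hb)

theorem opaqueH_nil : opaqueH ([] : History Txn Obj) :=
  ⟨fun _ _ _ _ hj => by simp at hj, [], by simp [equivalentH, completion],
    fun _ ht => by simp [txnsOf] at ht, fun _ _ _ _ hj => by simp at hj,
    fun _ _ ⟨ht, _⟩ => by simp [txnsOf] at ht⟩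

end TM

/-- Every locally opaque history is strictly serializable. -/
theorem strictSer_of_lo (Txn Obj : Type) (H : TM.History Txn Obj)
    (h : TM.locallyOpaque H) : TM.strictlySerializable H := by
  refine ⟨TM.validH_of_forall_validH_localSub fun t ht => (h t ht).1, ?_⟩
  rcases TM.restrictTo_committed_eq_nil_or_eq_localSub H with hnil | ⟨t, ht, hlocal⟩
  · exact hnil ▸ TM.opaqueH_nil
  · exact hlocal ▸ h t ht
end

section
/- Non-interference with respect to opacity is strictly stronger than permissiveness with respect to opacity: there exists a history H that is permissive with respect to opacity (H ∈ Perm(opacity)) but is not opacity-non-interfering (H ∉ NI(opacity)); hence NI(opacity) is a strict subset of Perm(opacity). -/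
open scoped Classical

/-!
Transactions are numbered 2, 3, 4 and the t-objects `x`, `y` are `0`, `1`. In the witness
`hist`, T₃ reads `x = 0`, T₂ writes `x := 1` and commits, T₄ reads `x = 1` and `y = 0`, and T₃
writes `y := 1` and aborts. It is opaque (serialize T₃, T₂, T₄ with T₄ aborted), and it is
permissive because committing T₃ creates a cycle: T₃ must precede T₂ (it read the initial `x`),
T₂ precedes T₄ in real time, and T₄ must precede T₃ (it read the initial `y`). It is not
non-interfering: T₄ is live when T₃ aborts, and once T₄ is removed T₃ can commit (serialize
T₃, T₂). Taking `R = ∅` shows `NI(P) ⊆ Perm(P)` for every criterion `P`.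
-/

namespace TM

variable {Txn Obj : Type}

deriving instance DecidableEq for Op

def Op.committer? : Op Txn Obj → Option Txn
  | .tryCommit u true => some u
  | _ => none

def Op.readResult? : Op Txn Obj → Option (Obj × ℕ)
  | .read _ x (some v) => some (x, v)
  | _ => none

def Op.writeTarget? : Op Txn Obj → Option (Txn × Obj)
  | .write u x _ => some (u, x)
  | _ => none

lemma Op.committer?_eq_some {o : Op Txn Obj} {u : Txn} :
    o.committer? = some u ↔ o = .tryCommit u true := by
  cases o with
  | tryCommit t b => cases b <;> simp [committer?]
  | _ => simp [committer?]

lemma Op.readResult?_eq_some {o : Op Txn Obj} {x : Obj} {v : ℕ} :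
    o.readResult? = some (x, v) ↔ ∃ t, o = .read t x (some v) := by
  cases o with
  | read t y w => cases w <;> simp [readResult?]
  | _ => simp [readResult?]

lemma Op.writeTarget?_eq_some {o : Op Txn Obj} {u : Txn} {x : Obj} :
    o.writeTarget? = some (u, x) ↔ ∃ v, o = .write u x v := by
  cases o <;> simp [writeTarget?]

def noEventAfter (H : History Txn Obj) (i : ℕ) (t : Txn) : Prop :=
  ∀ (j : ℕ) (b : Op Txn Obj), i < j → H[j]? = some b → b.txn ≠ t

section Reformulations

variable {H : History Txn Obj}

lemma mem_bind_committer? {i : ℕ} {u : Txn} :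
    u ∈ H[i]?.bind Op.committer? ↔ H[i]? = some (.tryCommit u true) := by
  simp [Option.bind_eq_some_iff, Op.committer?_eq_some]

lemma forall_read_iff {P : ℕ → Obj → ℕ → Prop} :
    (∀ j t x v, H[j]? = some (.read t x (some v)) → P j x v) ↔
      ∀ j < H.length, ∀ r ∈ H[j]?.bind Op.readResult?, P j r.1 r.2 := by
  simp only [Option.mem_def, Option.bind_eq_some_iff, Prod.forall, Op.readResult?_eq_some]
  constructor
  · rintro h j - x v ⟨o, ho, t, rfl⟩
    exact h j t x v ho
  · intro h j t x v hj
    exact h j (List.getElem?_eq_some_iff.1 hj).1 x v ⟨_, hj, t, rfl⟩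

lemma writesTo_iff_mem_filterMap {u : Txn} {x : Obj} :
    writesTo H u x ↔ (u, x) ∈ H.filterMap Op.writeTarget? := by
  simp [writesTo, List.mem_filterMap, Op.writeTarget?_eq_some]

lemma rtPrec_iff {t u : Txn} :
    rtPrec H t u ↔ t ∈ txnsOf H ∧ u ∈ txnsOf H ∧ complete H t ∧
      ∀ i (hi : i < H.length) j (hj : j < H.length), H[i].txn = t → H[j].txn = u → i < j := by
  refine and_congr_right fun _ => and_congr_right fun _ => and_congr_right fun _ => ⟨?_, ?_⟩
  · intro h i hi j hj hit hjt
    exact h i j _ _ (List.getElem?_eq_getElem hi) hit (List.getElem?_eq_getElem hj) hjt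
  · intro h i j a b ha hat hb hbt
    obtain ⟨hi, rfl⟩ := List.getElem?_eq_some_iff.1 ha
    obtain ⟨hj, rfl⟩ := List.getElem?_eq_some_iff.1 hb
    exact h i hi j hj hat hbt

lemma tSequential_iff :
    tSequential H ↔ ∀ o ∈ H, ∀ o' ∈ H, o.txn ≠ o'.txn →
      rtPrec H o.txn o'.txn ∨ rtPrec H o'.txn o.txn := by
  simp [tSequential, txnsOf]

lemma respectsRT_iff {S : History Txn Obj} :
    respectsRT H S ↔
      ∀ o ∈ H, ∀ o' ∈ H, rtPrec H o.txn o'.txn → rtPrec S o.txn o'.txn := by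
  refine ⟨fun h o _ o' _ => h o.txn o'.txn, fun h t u htu => ?_⟩
  obtain ⟨o, ho, rfl⟩ := htu.1
  obtain ⟨o', ho', rfl⟩ := htu.2.1
  exact h o ho o' ho' htu

lemma validH_iff : validH H ↔ ∀ j < H.length, ∀ r ∈ H[j]?.bind Op.readResult?,
    (∃ i < j, ∃ u ∈ H[i]?.bind Op.committer?, Op.write u r.1 r.2 ∈ H) ∨ r.2 = 0 := by
  rw [validH, forall_read_iff]
  simp only [mem_bind_committer?, exists_and_left]

lemma readLegalAt_iff {j : ℕ} {x : Obj} {v : ℕ} : readLegalAt H j x v ↔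
    (∃ i < j, ∃ u ∈ H[i]?.bind Op.committer?, writesTo H u x ∧ Op.write u x v ∈ H ∧
      ∀ i' < j, i < i' → ∀ u' ∈ H[i']?.bind Op.committer?, ¬ writesTo H u' x) ∨
    ((∀ i < j, ∀ u ∈ H[i]?.bind Op.committer?, ¬ writesTo H u x) ∧ v = 0) := by
  simp only [readLegalAt, mem_bind_committer?]
  grind

lemma noEventAfter_iff {i : ℕ} {t : Txn} :
    noEventAfter H i t ↔ ∀ j (hj : j < H.length), i < j → H[j].txn ≠ t := by
  refine ⟨fun h j hj hij => h j _ hij (List.getElem?_eq_getElem hj), fun h j b hij hb => ?_⟩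
  obtain ⟨hj, rfl⟩ := List.getElem?_eq_some_iff.1 hb
  exact h j hj hij

end Reformulations

section Decidability

variable [DecidableEq Txn] [DecidableEq Obj]

instance : DecidablePred (Op.aborting : Op Txn Obj → Prop)
  | .read _ _ none => .isTrue trivial
  | .read _ _ (some _) => .isFalse id
  | .write .. => .isFalse id
  | .writeFail .. => .isTrue trivial
  | .tryCommit _ true => .isFalse id
  | .tryCommit _ false => .isTrue trivial
  | .tryAbort _ => .isTrue trivial

instance (H : History Txn Obj) (t : Txn) : Decidable (t ∈ txnsOf H) :=
  inferInstanceAs (Decidable (∃ o ∈ H, o.txn = t))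

instance (H : History Txn Obj) (t : Txn) : Decidable (committed H t) :=
  inferInstanceAs (Decidable (_ ∈ H))

instance (H : History Txn Obj) (t : Txn) : Decidable (aborted H t) :=
  inferInstanceAs (Decidable (∃ o ∈ H, o.txn = t ∧ o.aborting))

instance (H : History Txn Obj) (t : Txn) : Decidable (complete H t) :=
  inferInstanceAs (Decidable (_ ∨ _))

instance (H : History Txn Obj) (t : Txn) : Decidable (incomplete H t) :=
  inferInstanceAs (Decidable (_ ∧ _))

instance (H : History Txn Obj) (u : Txn) (x : Obj) : Decidable (writesTo H u x) :=
  decidable_of_iff' _ writesTo_iff_mem_filterMap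

instance (H : History Txn Obj) (t u : Txn) : Decidable (rtPrec H t u) :=
  decidable_of_iff' _ rtPrec_iff

instance (H : History Txn Obj) : Decidable (tSequential H) :=
  decidable_of_iff' _ tSequential_iff

instance (H S : History Txn Obj) : Decidable (respectsRT H S) :=
  decidable_of_iff' _ respectsRT_iff

instance (H : History Txn Obj) : Decidable (validH H) :=
  decidable_of_iff' _ validH_iff

set_option synthInstance.maxSize 512 in
instance (H : History Txn Obj) (j : ℕ) (x : Obj) (v : ℕ) : Decidable (readLegalAt H j x v) :=
  decidable_of_iff' _ (readLegalAt_iff (H := H))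

instance (H : History Txn Obj) : Decidable (legalH H) :=
  decidable_of_iff' _ forall_read_iff

instance (H S : History Txn Obj) : Decidable (equivalentH H S) :=
  inferInstanceAs (Decidable (H.Perm S))

instance (H : History Txn Obj) (i : ℕ) (t : Txn) : Decidable (noEventAfter H i t) :=
  decidable_of_iff' _ noEventAfter_iff

/-- `completion` with computable instances in its `if`, so that `decide` can evaluate it. -/
lemma completion_eq (H : History Txn Obj) : completion H =
    ((List.range H.length).map fun i =>
      match H[i]? with
      | none => []
      | some o => if incomplete H o.txn ∧ noEventAfter H i o.txn
          then [o, Op.tryAbort o.txn] else [o]).flatten := by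
  unfold completion noEventAfter
  congr!

end Decidability

section Completion

variable {H : History Txn Obj} {o : Op Txn Obj}

lemma mem_completion_of_mem (h : o ∈ H) : o ∈ completion H := by
  obtain ⟨i, hi, rfl⟩ := List.getElem_of_mem h
  rw [completion, List.mem_flatten]
  refine ⟨_, List.mem_map_of_mem (List.mem_range.2 hi), ?_⟩
  rw [List.getElem?_eq_getElem hi]
  dsimp only
  split_ifs <;> simp

lemma mem_or_eq_tryAbort_of_mem_completion (h : o ∈ completion H) :
    o ∈ H ∨ ∃ t, o = .tryAbort t := by
  obtain ⟨l, hl, hol⟩ := List.mem_flatten.1 h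
  obtain ⟨i, -, rfl⟩ := List.mem_map.1 hl
  split at hol
  · simp at hol
  · next a ha =>
    have ham : a ∈ H := List.mem_of_getElem? ha
    split_ifs at hol <;> simp at hol
    · rcases hol with rfl | rfl
      exacts [Or.inl ham, Or.inr ⟨_, rfl⟩]
    · exact Or.inl (hol ▸ ham)

end Completion

/-- Otherwise the read would have a last write, and that write would be of the value read. -/
lemma legalH.read_lt_commit_of_unwritten {S : History Txn Obj} (hS : legalH S) {p i : ℕ}
    {t u : Txn} {x : Obj} {v : ℕ} (hp : S[p]? = some (.read t x (some v)))
    (hv : ∀ w, Op.write w x v ∉ S) (hi : S[i]? = some (.tryCommit u true))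
    (hu : writesTo S u x) : p < i := by
  rcases hS p t x v hp with ⟨-, w, -, -, -, hw, -⟩ | ⟨hnone, -⟩
  · exact absurd hw (hv w)
  · rcases lt_trichotomy i p with h | rfl | h
    · exact absurd hu (hnone i u h hi)
    · simp [hp] at hi
    · exact h

lemma prefixUpTo_append_singleton {pre : History Txn Obj} {o : Op Txn Obj} {t : Txn}
    (ho : o.txn = t) : prefixUpTo (pre ++ [o]) t = pre ++ [o] := by
  simp [prefixUpTo, List.findIdx_cons, ho]

lemma HTC_append_tryCommit_false (pre : History Txn Obj) (t : Txn) :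
    HTC (pre ++ [.tryCommit t false]) t = {pre ++ [.tryCommit t true]} := by
  ext H'
  rw [HTC, prefixUpTo_append_singleton (o := .tryCommit t false) (t := t) rfl]
  simp only [Set.mem_ofPred_eq, Set.mem_singleton_iff]
  constructor
  · rintro ⟨pre', o, o', h, -, hcv, rfl⟩
    obtain ⟨rfl, ho⟩ := List.append_inj' h rfl
    obtain rfl := List.singleton_inj.1 ho
    rw [show o' = .tryCommit t true from hcv]
  · rintro rfl
    exact ⟨pre, _, _, rfl, rfl, rfl, rfl⟩

lemma removeTxns_empty (H : History Txn Obj) : removeTxns H ∅ = H := by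
  simp [removeTxns]

lemma nonInterfering_subset_permissive (P : Set (History Txn Obj)) :
    nonInterfering P ⊆ permissive P := fun _ hH =>
  ⟨hH.1, fun t ht H' hH' =>
    hH.2 t ht ∅ (Set.empty_subset _) H' ⟨H', hH', (removeTxns_empty H').symm⟩⟩

def hist : History ℕ ℕ :=
  [.read 3 0 (some 0), .write 2 0 1, .tryCommit 2 true,
   .read 4 0 (some 1), .read 4 1 (some 0), .write 3 1 1] ++ [.tryCommit 3 false]

def histCommit : History ℕ ℕ :=
  [.read 3 0 (some 0), .write 2 0 1, .tryCommit 2 true,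
   .read 4 0 (some 1), .read 4 1 (some 0), .write 3 1 1] ++ [.tryCommit 3 true]

def histCommitWithout4 : History ℕ ℕ :=
  [.read 3 0 (some 0), .write 2 0 1, .tryCommit 2 true, .write 3 1 1, .tryCommit 3 true]

lemma opaqueH_hist : opaqueH hist :=
  ⟨by decide,
    [.read 3 0 (some 0), .write 3 1 1, .tryCommit 3 false, .write 2 0 1, .tryCommit 2 true,
      .read 4 0 (some 1), .read 4 1 (some 0), .tryAbort 4],
    by rw [completion_eq]; decide, by decide, by decide, by decide⟩

lemma opaqueH_histCommitWithout4 : opaqueH histCommitWithout4 :=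
  ⟨by decide,
    [.read 3 0 (some 0), .write 3 1 1, .tryCommit 3 true, .write 2 0 1, .tryCommit 2 true],
    by rw [completion_eq]; decide, by decide, by decide, by decide⟩

lemma not_opaqueH_histCommit : ¬ opaqueH histCommit := by
  rintro ⟨-, S, hequiv, hseq, hlegal, hrt⟩
  have mem_S : ∀ o ∈ histCommit, o ∈ S := fun _ ho =>
    hequiv.mem_iff.2 (mem_completion_of_mem ho)
  have unwritten : ∀ w z, Op.write w z 0 ∉ S := by
    intro w z hw
    rcases mem_or_eq_tryAbort_of_mem_completion (hequiv.mem_iff.1 hw) with h | ⟨t, ht⟩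
    · simp [histCommit] at h
    · simp at ht
  obtain ⟨i2, hi2⟩ := List.getElem?_of_mem (mem_S (.tryCommit 2 true) (by decide))
  obtain ⟨i3, hi3⟩ := List.getElem?_of_mem (mem_S (.tryCommit 3 true) (by decide))
  obtain ⟨p3, hp3⟩ := List.getElem?_of_mem (mem_S (.read 3 0 (some 0)) (by decide))
  obtain ⟨p4, hp4⟩ := List.getElem?_of_mem (mem_S (.read 4 1 (some 0)) (by decide))
  have hp3i2 : p3 < i2 := hlegal.read_lt_commit_of_unwritten hp3 (unwritten · 0) hi2
    ⟨1, mem_S (.write 2 0 1) (by decide)⟩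
  have hp4i3 : p4 < i3 := hlegal.read_lt_commit_of_unwritten hp4 (unwritten · 1) hi3
    ⟨1, mem_S (.write 3 1 1) (by decide)⟩
  have hi2p4 : i2 < p4 := (hrt 2 4 (by decide)).2.2.2 i2 p4 _ _ hi2 rfl hp4 rfl
  rcases hseq 2 ⟨_, mem_S (.tryCommit 2 true) (by decide), rfl⟩
      3 ⟨_, mem_S (.tryCommit 3 true) (by decide), rfl⟩ (by decide)
    with h23 | h32
  · exact absurd (h23.2.2.2 i2 p3 _ _ hi2 rfl hp3 rfl) (by omega)
  · exact absurd (h32.2.2.2 i3 i2 _ _ hi3 rfl hi2 rfl) (by omega)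

lemma hist_mem_permissive : hist ∈ permissive {K : History ℕ ℕ | opaqueH K} := by
  refine ⟨opaqueH_hist, fun t ⟨o, ho, hot, hab⟩ => ?_⟩
  have only_3_aborts : ∀ o ∈ hist, o.aborting → o.txn = 3 := by decide
  rw [← hot, only_3_aborts o ho hab, hist, HTC_append_tryCommit_false]
  rintro _ rfl
  exact not_opaqueH_histCommit

lemma hist_not_mem_nonInterfering : hist ∉ nonInterfering {K : History ℕ ℕ | opaqueH K} := by
  rintro ⟨-, hni⟩
  have h4 : ({4} : Set ℕ) ⊆ prevAb hist 3 := by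
    rw [Set.singleton_subset_iff, prevAb, hist,
      prefixUpTo_append_singleton (o := .tryCommit 3 false) (t := 3) rfl]
    exact Or.inr (by decide)
  refine hni 3 (by decide) {4} h4 _ ⟨histCommit, ?_, ?_⟩ opaqueH_histCommitWithout4
  · rw [hist, HTC_append_tryCommit_false]; rfl
  · simp [removeTxns, histCommit, histCommitWithout4, List.filter, Op.txn]

end TM

/-- Non-interference w.r.t. opacity is strictly stronger than
permissiveness w.r.t. opacity: there is a history that is opacity-permissive but not
opacity-non-interfering; hence `NI(opacity)` is a strict subset of `Perm(opacity)`. -/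
theorem ni_opacity_ssubset_perm_opacity :
    (∃ H : TM.History ℕ ℕ,
        H ∈ TM.permissive {K : TM.History ℕ ℕ | TM.opaqueH K} ∧
        H ∉ TM.nonInterfering {K : TM.History ℕ ℕ | TM.opaqueH K}) ∧
    TM.nonInterfering {K : TM.History ℕ ℕ | TM.opaqueH K} ⊂
      TM.permissive {K : TM.History ℕ ℕ | TM.opaqueH K} := by
  have hist_mem_diff := And.intro TM.hist_mem_permissive TM.hist_not_mem_nonInterfering
  refine ⟨⟨TM.hist, hist_mem_diff⟩, ?_⟩
  exact (Set.ssubset_iff_of_subset (TM.nonInterfering_subset_permissive _)).2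
    ⟨TM.hist, hist_mem_diff⟩
end
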